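/- arXiv:1401.6755 — 3 statements merged into one kernel-verified Lean document; each statement's English description precedes it below -/
import Mathlib

section
/- Let G be a finite group whose power graph P(G) is C_4-free, and suppose the center Z(G) contains an element of order p^2 and an element of order q, where p and q are distinct primes. Then the only primes dividing |G| are p and q, the Sylow p-subgroup P of G is cyclic and normal in G, every Sylow q-subgroup of G has exponent q, and the index [G : C_G(P)] is either 1 or q. -/
/-- Adjacency in the power graph of a group: two distinct elements are adjacent
iff one is a power of the other. -/
def pgAdj {G : Type*} [Group G] (x y : G) : Prop :=
  x ≠ y ∧ (x ∈ Subgroup.zpowers y ∨ y ∈ Subgroup.zpowers x)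

/-- The power graph contains an induced 4-cycle. -/
def pgHasInducedC4 (G : Type*) [Group G] : Prop :=
  ∃ x u y v : G,
    x ≠ u ∧ x ≠ y ∧ x ≠ v ∧ u ≠ y ∧ u ≠ v ∧ y ≠ v ∧
    pgAdj x u ∧ pgAdj u y ∧ pgAdj y v ∧ pgAdj v x ∧
    ¬ pgAdj x y ∧ ¬ pgAdj u v

/-- The power graph is `C₄`-free. -/
def pgC4Free (G : Type*) [Group G] : Prop := ¬ pgHasInducedC4 G

/-!
Write `a = z₁` and `c = z₂`. If `x` and `y` have order prime to `q` and `⟨x⟩ ∩ ⟨y⟩` contains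
some `δ ≠ 1`, then `xc – c – yc – δ` is an induced 4-cycle unless one of `x`, `y` is a power of
the other. For `x = a` and `y = ta` with `t ^ p = 1` this puts every element of order `p` into
`⟨a⟩`, so `a ^ p` is a power of every nontrivial `p`-element and any two `p`-elements are
comparable: the Sylow `p`-subgroup is generated by a `p`-element of maximal order, hence cyclic
and unique. For `y = t a ^ p` with `t` of prime order `s ∉ {p, q}` the two orders `p²` and `sp`
are incomparable, so no such `s` divides `|G|`. An element `b` of order `q²` would give the
induced cycle `ab^q – a^p – a^p b – b^q`, so `q² ∤ exp G`. This bounds the exponent of a Sylow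
`q`-subgroup and the index `[G : C_G(P)]`, a power of `q`, since `G / C_G(P)` embeds in
`Aut P ≅ (ℤ/p^m)ˣ`, whose subgroups of order prime to `p` are cyclic.
-/

open Subgroup

theorem Nat.not_sq_mul_dvd_mul_sq {r s : ℕ} (hr : r.Prime) (hs : s.Prime) (hrs : r ≠ s) :
    ¬ r ^ 2 * s ∣ r * s ^ 2 := by
  intro h
  have : r * r ∣ r * s ^ 2 := Nat.dvd_trans ⟨s, by ring⟩ h
  exact hrs ((Nat.prime_dvd_prime_iff_eq hr hs).mp
    (hr.dvd_of_dvd_pow (Nat.dvd_of_mul_dvd_mul_left hr.pos this)))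

theorem Nat.eq_one_or_self_of_dvd_prime_pow_of_not_sq_dvd {q n k : ℕ} (hq : q.Prime)
    (hn : n ∣ q ^ k) (h : ¬ q ^ 2 ∣ n) : n = 1 ∨ n = q := by
  obtain ⟨i, -, rfl⟩ := (Nat.dvd_prime_pow hq).mp hn
  rcases i with _ | _ | i
  · exact .inl (pow_zero q)
  · exact .inr (pow_one q)
  · exact absurd (pow_dvd_pow q (by omega)) h

theorem ZMod.isCyclic_subgroup_units_of_not_dvd_card {p n m : ℕ} (hp : p.Prime) (hn : n = p ^ m)
    (H : Subgroup (ZMod n)ˣ) (hH : ¬ p ∣ Nat.card H) : IsCyclic H := by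
  subst hn
  rcases eq_or_ne p 2 with rfl | hp2
  · have hdvd : Nat.card H ∣ 2 ^ m := by
      refine (card_subgroup_dvd_card H).trans ?_
      rw [Nat.card_eq_fintype_card, ZMod.card_units_eq_totient]
      cases m with
      | zero => simp
      | succ k =>
        rw [Nat.totient_prime_pow_succ Nat.prime_two]
        simpa using pow_dvd_pow 2 k.le_succ
    have hcop : (Nat.card H).Coprime (2 ^ m) :=
      (((Nat.Prime.coprime_iff_not_dvd Nat.prime_two).mpr hH).pow_left m).symm
    have := (Nat.card_eq_one_iff_unique.mp (hcop.eq_one_of_dvd hdvd)).1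
    infer_instance
  · have := ZMod.isCyclic_units_of_prime_pow p hp hp2 m
    infer_instance

section Cyclic

variable {G : Type*} [Group G]

theorem Commute.mem_zpowers_mul_left {a b : G} (h : Commute a b)
    (hab : (orderOf a).Coprime (orderOf b)) : a ∈ zpowers (a * b) := by
  have : a ^ orderOf b ∈ zpowers (a * b) := by
    simpa [h.mul_pow, pow_orderOf_eq_one] using npow_mem_zpowers (a * b) (orderOf b)
  exact zpowers_le.mpr this (mem_zpowers_pow_iff.mpr hab.symm)

theorem Commute.mem_zpowers_mul_right {a b : G} (h : Commute a b)
    (hab : (orderOf a).Coprime (orderOf b)) : b ∈ zpowers (a * b) :=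
  h.eq ▸ h.symm.mem_zpowers_mul_left hab.symm

theorem ne_one_of_orderOf_eq {a : G} {n : ℕ} (ha : orderOf a = n) (hn : n ≠ 1) : a ≠ 1 :=
  fun h => hn (by rw [← ha, h, orderOf_one])

theorem notMem_zpowers_of_coprime {a b : G} (hab : (orderOf a).Coprime (orderOf b))
    (ha : a ≠ 1) : a ∉ zpowers b := fun h =>
  ha (orderOf_eq_one_iff.mp (hab.eq_one_of_dvd (orderOf_dvd_of_mem_zpowers h)))

theorem orderOf_pow_of_orderOf_eq_sq {a : G} {r : ℕ} (hr : r ≠ 0) (ha : orderOf a = r ^ 2) :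
    orderOf (a ^ r) = r := by
  rw [orderOf_pow_of_dvd hr (ha ▸ dvd_pow_self r two_ne_zero), ha, sq,
    Nat.mul_div_cancel _ (Nat.pos_of_ne_zero hr)]

variable [Finite G]

theorem zpowers_eq_of_mem_of_orderOf_le {x y : G} (h : x ∈ zpowers y)
    (hle : orderOf y ≤ orderOf x) : zpowers x = zpowers y :=
  eq_of_le_of_card_ge (zpowers_le.mpr h) (by simpa only [Nat.card_zpowers] using hle)

theorem mem_zpowers_pow_orderOf_div {g x : G} {n : ℕ} (hx : x ∈ zpowers g)
    (hn : n ∣ orderOf g) (h : x ^ n = 1) : x ∈ zpowers (g ^ (orderOf g / n)) := by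
  obtain ⟨k, rfl⟩ := (mem_powers_iff_mem_zpowers.mpr hx : x ∈ Submonoid.powers g)
  have hn0 : 0 < n := Nat.pos_of_dvd_of_pos hn (orderOf_pos g)
  have hdvd : orderOf g / n * n ∣ k * n := by
    rw [Nat.div_mul_cancel hn, orderOf_dvd_iff_pow_eq_one, pow_mul, h]
  obtain ⟨j, rfl⟩ := (Nat.mul_dvd_mul_iff_right hn0).mp hdvd
  simpa only [pow_mul] using npow_mem_zpowers (g ^ (orderOf g / n)) j

theorem mem_zpowers_of_pow_orderOf_eq_one {g x y : G} (hx : x ∈ zpowers g)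
    (hy : y ∈ zpowers g) (h : x ^ orderOf y = 1) : x ∈ zpowers y := by
  have hdvd := orderOf_dvd_of_mem_zpowers hy
  have hyg := mem_zpowers_pow_orderOf_div hy hdvd (pow_orderOf_eq_one y)
  have hord : orderOf (g ^ (orderOf g / orderOf y)) = orderOf y :=
    orderOf_pow_orderOf_div (orderOf_pos g).ne' hdvd
  rw [zpowers_eq_of_mem_of_orderOf_le hyg hord.le]
  exact mem_zpowers_pow_orderOf_div hx hdvd h

theorem Commute.mem_zpowers_of_mem_zpowers_mul {x y c : G} (hyc : Commute y c)
    (hy : (orderOf y).Coprime (orderOf c)) (hx : (orderOf x).Coprime (orderOf c))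
    (h : x ∈ zpowers (y * c)) : x ∈ zpowers y := by
  have hdvd : orderOf x ∣ orderOf y * orderOf c :=
    hyc.orderOf_mul_eq_mul_orderOf_of_coprime hy ▸ orderOf_dvd_of_mem_zpowers h
  refine mem_zpowers_of_pow_orderOf_eq_one h (hyc.mem_zpowers_mul_left hy) ?_
  exact orderOf_dvd_iff_pow_eq_one.mp (hx.dvd_of_dvd_mul_right hdvd)

theorem Commute.mem_zpowers_of_mul_mem_zpowers_mul {x y c : G} (hxc : Commute x c)
    (hyc : Commute y c) (hx : (orderOf x).Coprime (orderOf c))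
    (hy : (orderOf y).Coprime (orderOf c)) (h : x * c ∈ zpowers (y * c)) : x ∈ zpowers y :=
  hyc.mem_zpowers_of_mem_zpowers_mul hy hx (zpowers_le.mpr h (hxc.mem_zpowers_mul_left hx))

end Cyclic

section PowerGraph

variable {G : Type*} [Group G]

theorem pgHasInducedC4_of_notMem_zpowers {a b c d : G} (hab : a ∉ zpowers b)
    (hba : b ∉ zpowers a) (hcd : c ∉ zpowers d) (hdc : d ∉ zpowers c) (hca : c ∈ zpowers a)
    (hcb : c ∈ zpowers b) (hda : d ∈ zpowers a) (hdb : d ∈ zpowers b) :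
    pgHasInducedC4 G := by
  have ne_of_mem {x y z : G} (hx : x ∈ zpowers z) (hy : y ∉ zpowers z) : x ≠ y := by
    rintro rfl; exact hy hx
  have hac : a ≠ c := (ne_of_mem hcb hab).symm
  have hbc : c ≠ b := ne_of_mem hca hba
  have had : d ≠ a := ne_of_mem hdb hab
  have hbd : b ≠ d := (ne_of_mem hda hba).symm
  exact ⟨a, c, b, d, hac, (ne_of_mem (mem_zpowers b) hab).symm, had.symm, hbc,
    (ne_of_mem (mem_zpowers d) hcd).symm, hbd, ⟨hac, .inr hca⟩, ⟨hbc, .inl hcb⟩,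
    ⟨hbd, .inr hdb⟩, ⟨had, .inl hda⟩, fun h => h.2.elim hab hba,
    fun h => h.2.elim hcd hdc⟩

theorem pgHasInducedC4_of_commute_mul [Finite G] {x y c δ : G} (hxc : Commute x c)
    (hyc : Commute y c) (hx : (orderOf x).Coprime (orderOf c))
    (hy : (orderOf y).Coprime (orderOf c)) (hc : c ≠ 1) (hδ : δ ≠ 1) (hδx : δ ∈ zpowers x)
    (hδy : δ ∈ zpowers y) (hxy : x ∉ zpowers y) (hyx : y ∉ zpowers x) :
    pgHasInducedC4 G := by
  have hδc : (orderOf δ).Coprime (orderOf c) :=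
    hx.coprime_dvd_left (orderOf_dvd_of_mem_zpowers hδx)
  exact pgHasInducedC4_of_notMem_zpowers
    (mt (hxc.mem_zpowers_of_mul_mem_zpowers_mul hyc hx hy) hxy)
    (mt (hyc.mem_zpowers_of_mul_mem_zpowers_mul hxc hy hx) hyx)
    (notMem_zpowers_of_coprime hδc.symm hc) (notMem_zpowers_of_coprime hδc hδ)
    (hxc.mem_zpowers_mul_right hx) (hyc.mem_zpowers_mul_right hy)
    (zpowers_le.mpr (hxc.mem_zpowers_mul_left hx) hδx)
    (zpowers_le.mpr (hyc.mem_zpowers_mul_left hy) hδy)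

theorem pgHasInducedC4_of_commute_of_orderOf_sq [Finite G] {r s : ℕ} (hr : r.Prime)
    (hs : s.Prime) (hrs : r ≠ s) {a b : G} (hab : Commute a b) (ha : orderOf a = r ^ 2)
    (hb : orderOf b = s ^ 2) : pgHasInducedC4 G := by
  have har := orderOf_pow_of_orderOf_eq_sq hr.ne_zero ha
  have hbs := orderOf_pow_of_orderOf_eq_sq hs.ne_zero hb
  have hrs' : r.Coprime s := (Nat.coprime_primes hr hs).mpr hrs
  have h₁ : (orderOf a).Coprime (orderOf (b ^ s)) := by rw [ha, hbs]; exact hrs'.pow_left 2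
  have h₂ : (orderOf (a ^ r)).Coprime (orderOf b) := by rw [har, hb]; exact hrs'.pow_right 2
  have ho₁ : orderOf (a * b ^ s) = r ^ 2 * s := by
    rw [(hab.pow_right s).orderOf_mul_eq_mul_orderOf_of_coprime h₁, ha, hbs]
  have ho₂ : orderOf (a ^ r * b) = r * s ^ 2 := by
    rw [(hab.pow_left r).orderOf_mul_eq_mul_orderOf_of_coprime h₂, har, hb]
  refine pgHasInducedC4_of_notMem_zpowers (a := a * b ^ s) (b := a ^ r * b) (c := a ^ r)
    (d := b ^ s) ?_ ?_ ?_ ?_ (pow_mem ((hab.pow_right s).mem_zpowers_mul_left h₁) r)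
    ((hab.pow_left r).mem_zpowers_mul_left h₂) ((hab.pow_right s).mem_zpowers_mul_right h₁)
    (pow_mem ((hab.pow_left r).mem_zpowers_mul_right h₂) s)
  · exact fun h =>
      Nat.not_sq_mul_dvd_mul_sq hr hs hrs (ho₁ ▸ ho₂ ▸ orderOf_dvd_of_mem_zpowers h)
  · refine fun h => Nat.not_sq_mul_dvd_mul_sq hs hr hrs.symm ?_
    simpa only [ho₁, ho₂, mul_comm] using orderOf_dvd_of_mem_zpowers h
  · exact notMem_zpowers_of_coprime (by rwa [har, hbs]) (ne_one_of_orderOf_eq har hr.ne_one)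
  · exact notMem_zpowers_of_coprime (by rw [har, hbs]; exact hrs'.symm)
      (ne_one_of_orderOf_eq hbs hs.ne_one)

theorem pgC4Free.mem_zpowers_or_mem_zpowers [Finite G] (h : pgC4Free G) {x y c δ : G}
    (hc : c ∈ center G) (hc1 : c ≠ 1) (hx : (orderOf x).Coprime (orderOf c))
    (hy : (orderOf y).Coprime (orderOf c)) (hδ : δ ≠ 1) (hδx : δ ∈ zpowers x)
    (hδy : δ ∈ zpowers y) : x ∈ zpowers y ∨ y ∈ zpowers x := by
  by_contra! hxy
  exact h (pgHasInducedC4_of_commute_mul (mem_center_iff.mp hc x) (mem_center_iff.mp hc y) hx hy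
    hc1 hδ hδx hδy hxy.1 hxy.2)

end PowerGraph

section CentralElements

variable {G : Type*} [Group G] [Finite G]

theorem pgC4Free.mem_zpowers_of_pow_eq_one (h : pgC4Free G) {p : ℕ} (hp : p.Prime) {a c t : G}
    (ha : a ∈ center G) (hao : orderOf a = p ^ 2) (hc : c ∈ center G) (hc1 : c ≠ 1)
    (hpc : p.Coprime (orderOf c)) (ht : t ^ p = 1) : t ∈ zpowers a := by
  have hta : Commute t a := mem_center_iff.mp ha t
  have htp2 : t ^ p ^ 2 = 1 := by rw [sq, pow_mul, ht, one_pow]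
  have hta_ord : orderOf (t * a) ∣ p ^ 2 :=
    orderOf_dvd_of_pow_eq_one (by rw [hta.mul_pow, htp2, ← hao, pow_orderOf_eq_one, one_mul])
  have hδ : a ^ p ∈ zpowers (t * a) := by
    rw [← one_mul (a ^ p), ← ht, ← hta.mul_pow]; exact npow_mem_zpowers _ p
  have hap : a ^ p ≠ 1 :=
    ne_one_of_orderOf_eq (orderOf_pow_of_orderOf_eq_sq hp.ne_zero hao) hp.ne_one
  rcases h.mem_zpowers_or_mem_zpowers hc hc1 (hao ▸ hpc.pow_left 2)
    ((hpc.pow_left 2).coprime_dvd_left hta_ord) hap (npow_mem_zpowers a p) hδ with h₁ | h₁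
  · refine mem_zpowers_of_pow_orderOf_eq_one ?_ h₁ (hao ▸ htp2)
    simpa using mul_mem (mem_zpowers (t * a)) (inv_mem (zpowers_le.mpr h₁ (mem_zpowers a)))
  · simpa using mul_mem h₁ (inv_mem (mem_zpowers a))

theorem pgC4Free.pow_mem_zpowers (h : pgC4Free G) {p : ℕ} (hp : p.Prime) {a c x : G}
    (ha : a ∈ center G) (hao : orderOf a = p ^ 2) (hc : c ∈ center G) (hc1 : c ≠ 1)
    (hpc : p.Coprime (orderOf c)) {k : ℕ} (hx : orderOf x = p ^ k) (hx1 : x ≠ 1) :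
    a ^ p ∈ zpowers x := by
  have hpx : p ∣ orderOf x := by
    rw [hx]; refine dvd_pow_self p fun hk => hx1 ?_
    rwa [hk, pow_zero, orderOf_eq_one_iff] at hx
  have hw : orderOf (x ^ (orderOf x / p)) = p := orderOf_pow_orderOf_div (orderOf_pos x).ne' hpx
  have hwa : x ^ (orderOf x / p) ∈ zpowers a :=
    h.mem_zpowers_of_pow_eq_one hp ha hao hc hc1 hpc (orderOf_dvd_iff_pow_eq_one.mp (dvd_of_eq hw))
  have hap : (a ^ p) ^ orderOf (x ^ (orderOf x / p)) = 1 := by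
    rw [hw, ← pow_mul, ← sq, ← hao, pow_orderOf_eq_one]
  exact zpowers_le.mpr (npow_mem_zpowers x _)
    (mem_zpowers_of_pow_orderOf_eq_one (npow_mem_zpowers a p) hwa hap)

theorem pgC4Free.mem_zpowers_or_of_orderOf_eq_prime_pow (h : pgC4Free G) {p : ℕ} (hp : p.Prime)
    {a c : G} (ha : a ∈ center G) (hao : orderOf a = p ^ 2) (hc : c ∈ center G) (hc1 : c ≠ 1)
    (hpc : p.Coprime (orderOf c)) {x y : G} {i j : ℕ} (hx : orderOf x = p ^ i)
    (hy : orderOf y = p ^ j) : x ∈ zpowers y ∨ y ∈ zpowers x := by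
  rcases eq_or_ne x 1 with rfl | hx1
  · exact .inl (one_mem _)
  rcases eq_or_ne y 1 with rfl | hy1
  · exact .inr (one_mem _)
  exact h.mem_zpowers_or_mem_zpowers hc hc1 (hx ▸ hpc.pow_left i) (hy ▸ hpc.pow_left j)
    (ne_one_of_orderOf_eq (orderOf_pow_of_orderOf_eq_sq hp.ne_zero hao) hp.ne_one)
    (h.pow_mem_zpowers hp ha hao hc hc1 hpc hx hx1) (h.pow_mem_zpowers hp ha hao hc hc1 hpc hy hy1)

theorem pgC4Free.eq_or_eq_of_prime_dvd_card (h : pgC4Free G) {p q : ℕ} (hp : p.Prime)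
    (hq : q.Prime) (hpq : p ≠ q) {a c : G} (ha : a ∈ center G) (hao : orderOf a = p ^ 2)
    (hc : c ∈ center G) (hco : orderOf c = q) {s : ℕ} (hs : s.Prime) (hsG : s ∣ Nat.card G) :
    s = p ∨ s = q := by
  by_contra! hspq
  have := Fact.mk hs
  obtain ⟨t, hto⟩ := exists_prime_orderOf_dvd_card' s hsG
  have hap := orderOf_pow_of_orderOf_eq_sq hp.ne_zero hao
  have hsp : (orderOf t).Coprime (orderOf (a ^ p)) := by
    rw [hto, hap]; exact (Nat.coprime_primes hs hp).mpr hspq.1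
  have hta : Commute t (a ^ p) := mem_center_iff.mp (pow_mem ha p) t
  have hy : orderOf (t * a ^ p) = s * p := by
    rw [hta.orderOf_mul_eq_mul_orderOf_of_coprime hsp, hto, hap]
  have hcop {r : ℕ} (hr : r.Prime) (hrq : r ≠ q) : r.Coprime (orderOf c) :=
    hco ▸ (Nat.coprime_primes hr hq).mpr hrq
  rcases h.mem_zpowers_or_mem_zpowers hc (ne_one_of_orderOf_eq hco hq.ne_one)
    (hao ▸ (hcop hp hpq).pow_left 2) (hy ▸ (hcop hs hspq.2).mul_left (hcop hp hpq))
    (ne_one_of_orderOf_eq hap hp.ne_one) (npow_mem_zpowers a p)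
    (hta.mem_zpowers_mul_right hsp) with h₁ | h₁
  · have : p * p ∣ s * p := by simpa [hao, hy, sq] using orderOf_dvd_of_mem_zpowers h₁
    exact hspq.1
      ((Nat.prime_dvd_prime_iff_eq hp hs).mp (Nat.dvd_of_mul_dvd_mul_right hp.pos this)).symm
  · have : s ∣ p ^ 2 :=
      Nat.dvd_trans (Dvd.intro p rfl) (hy ▸ hao ▸ orderOf_dvd_of_mem_zpowers h₁)
    exact hspq.1 ((Nat.prime_dvd_prime_iff_eq hs hp).mp (hs.dvd_of_dvd_pow this))

theorem pgC4Free.not_sq_dvd_orderOf (h : pgC4Free G) {p q : ℕ} (hp : p.Prime) (hq : q.Prime)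
    (hpq : p ≠ q) {a : G} (ha : a ∈ center G) (hao : orderOf a = p ^ 2) (g : G) :
    ¬ q ^ 2 ∣ orderOf g := fun hdvd =>
  h (pgHasInducedC4_of_commute_of_orderOf_sq hp hq hpq (mem_center_iff.mp ha _).symm hao
    (orderOf_pow_orderOf_div (orderOf_pos g).ne' hdvd))

end CentralElements

section Sylow

variable {G : Type*} [Group G]

theorem not_sq_dvd_exponent [Finite G] {q : ℕ} (hq : q.Prime)
    (h : ∀ g : G, ¬ q ^ 2 ∣ orderOf g) : ¬ q ^ 2 ∣ Monoid.exponent G := by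
  intro hdvd
  obtain ⟨g, hg⟩ := hq.exists_orderOf_eq_pow_factorization_exponent G
  refine h g (hg ▸ pow_dvd_pow q ?_)
  exact (hq.pow_dvd_iff_le_factorization Monoid.exponent_ne_zero_of_finite).mp hdvd

theorem exists_forall_sylow_eq_zpowers [Finite G] {p : ℕ} [Fact p.Prime]
    (h : ∀ x y : G, (∃ i, orderOf x = p ^ i) → (∃ j, orderOf y = p ^ j) →
      x ∈ zpowers y ∨ y ∈ zpowers x) :
    ∃ x₀ : G, ∀ P : Sylow p G, (P : Subgroup G) = zpowers x₀ := by
  obtain ⟨x₀, ⟨m, hm⟩, hmax⟩ := Set.exists_max_image {g : G | ∃ k, orderOf g = p ^ k}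
    orderOf (Set.toFinite _) ⟨1, 0, by simp⟩
  have hall (g : G) (hg : ∃ k, orderOf g = p ^ k) : g ∈ zpowers x₀ :=
    (h g x₀ hg ⟨m, hm⟩).elim id fun hx₀ =>
      zpowers_eq_of_mem_of_orderOf_le hx₀ (hmax g hg) ▸ mem_zpowers g
  refine ⟨x₀, fun P => (P.is_maximal' (.of_card (by rw [Nat.card_zpowers, hm])) ?_).symm⟩
  intro g hg
  obtain ⟨k, hk⟩ := IsPGroup.iff_orderOf.mp P.isPGroup' ⟨g, hg⟩
  exact hall g ⟨k, by rwa [orderOf_mk] at hk⟩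

theorem ker_conjNormal (H : Subgroup G) [H.Normal] :
    (MulAut.conjNormal : G →* MulAut H).ker = centralizer (H : Set G) := by
  ext g
  simp [MonoidHom.mem_ker, MulEquiv.ext_iff, Subtype.ext_iff, mem_centralizer_iff,
    eq_mul_inv_iff_mul_eq, eq_comm]

theorem index_centralizer_dvd_exponent [Finite G] {p : ℕ} (hp : p.Prime) (P : Subgroup G)
    [P.Normal] [IsCyclic P] (hP : IsPGroup p P) (hpP : ¬ p ∣ (centralizer (P : Set G)).index) :
    (centralizer (P : Set G)).index ∣ Monoid.exponent G := by
  have := Fact.mk hp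
  obtain ⟨m, hm⟩ := hP.exists_card_eq
  let φ : G →* (ZMod (Nat.card P))ˣ :=
    (IsCyclic.mulAutMulEquiv P : MulAut P →* _).comp MulAut.conjNormal
  have hker : φ.ker = centralizer (P : Set G) := by
    rw [MonoidHom.ker_mulEquiv_comp, ker_conjNormal]
  rw [← hker, index_ker] at hpP ⊢
  have := ZMod.isCyclic_subgroup_units_of_not_dvd_card hp hm φ.range hpP
  rw [← IsCyclic.exponent_eq_card]
  exact MonoidHom.exponent_dvd φ.rangeRestrict_surjective

theorem Sylow.index_centralizer_eq_one_or_eq [Finite G] {p q : ℕ} [Fact p.Prime] (hq : q.Prime)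
    (P : Sylow p G) [(P : Subgroup G).Normal] [IsCyclic (P : Subgroup G)]
    (hprimes : ∀ s : ℕ, s.Prime → s ∣ Nat.card G → s = p ∨ s = q)
    (hexp : ¬ q ^ 2 ∣ Monoid.exponent G) :
    (centralizer ((P : Subgroup G) : Set G)).index = 1 ∨
      (centralizer ((P : Subgroup G) : Set G)).index = q := by
  set C := centralizer ((P : Subgroup G) : Set G)
  have hpC : ¬ p ∣ C.index := fun h =>
    P.not_dvd_index (h.trans (index_dvd_of_le (le_centralizer (P : Subgroup G))))
  have hqC : C.index ∣ q ^ C.index.primeFactorsList.length := by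
    refine dvd_of_eq (Nat.eq_prime_pow_of_unique_prime_dvd index_ne_zero_of_finite ?_)
    intro s hs hsC
    refine (hprimes s hs (hsC.trans (index_dvd_card C))).resolve_left ?_
    rintro rfl
    exact hpC hsC
  have := index_centralizer_dvd_exponent Fact.out (P : Subgroup G) P.isPGroup' hpC
  exact Nat.eq_one_or_self_of_dvd_prime_pow_of_not_sq_dvd hq hqC fun h =>
    hexp (Nat.dvd_trans h this)

theorem Sylow.exponent_eq_of_not_sq_dvd [Finite G] {q : ℕ} [Fact q.Prime] (Q : Sylow q G)
    (hqG : q ∣ Nat.card G) (hexp : ¬ q ^ 2 ∣ Monoid.exponent G) :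
    Monoid.exponent Q = q := by
  have : Nontrivial Q := (nontrivial_iff_ne_bot _).mpr (Q.ne_bot_of_dvd_card hqG)
  have hQG : Monoid.exponent Q ∣ Monoid.exponent G :=
    Monoid.exponent_dvd_of_monoidHom _ (Q : Subgroup G).subtype_injective
  refine (Nat.eq_one_or_self_of_dvd_prime_pow_of_not_sq_dvd Fact.out
    (Group.exponent_dvd_nat_card.trans (dvd_of_eq Q.card_eq_multiplicity))
    fun h => hexp (h.trans hQG)).resolve_left ?_
  exact fun h => not_subsingleton Q (Monoid.exp_eq_one_iff.mp h)

end Sylow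

theorem structure_of_center_with_p2_and_q {G : Type*} [Group G] [Finite G]
    (h : pgC4Free G) (p q : ℕ) (hp : p.Prime) (hq : q.Prime) (hpq : p ≠ q)
    (z₁ : G) (hz₁ : z₁ ∈ Subgroup.center G) (hz₁o : orderOf z₁ = p ^ 2)
    (z₂ : G) (hz₂ : z₂ ∈ Subgroup.center G) (hz₂o : orderOf z₂ = q) :
    (∀ s : ℕ, s.Prime → s ∣ Nat.card G → s = p ∨ s = q) ∧
    (∀ P : Sylow p G,
        IsCyclic (P : Subgroup G) ∧ (P : Subgroup G).Normal ∧
        ((Subgroup.centralizer ((P : Subgroup G) : Set G)).index = 1 ∨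
         (Subgroup.centralizer ((P : Subgroup G) : Set G)).index = q)) ∧
    (∀ Q : Sylow q G, Monoid.exponent (Q : Subgroup G) = q) := by
  have := Fact.mk hp
  have := Fact.mk hq
  have hprimes (s : ℕ) (hs : s.Prime) (hsG : s ∣ Nat.card G) : s = p ∨ s = q :=
    h.eq_or_eq_of_prime_dvd_card hp hq hpq hz₁ hz₁o hz₂ hz₂o hs hsG
  have hexp : ¬ q ^ 2 ∣ Monoid.exponent G :=
    not_sq_dvd_exponent hq (h.not_sq_dvd_orderOf hp hq hpq hz₁ hz₁o)
  obtain ⟨x₀, hx₀⟩ := exists_forall_sylow_eq_zpowers (G := G) (p := p)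
    fun x y ⟨_, hx⟩ ⟨_, hy⟩ => h.mem_zpowers_or_of_orderOf_eq_prime_pow hp hz₁ hz₁o hz₂
      (ne_one_of_orderOf_eq hz₂o hq.ne_one) (hz₂o ▸ (Nat.coprime_primes hp hq).mpr hpq)
      hx hy
  have : Subsingleton (Sylow p G) := ⟨fun P Q => Sylow.ext ((hx₀ P).trans (hx₀ Q).symm)⟩
  refine ⟨hprimes, fun P => ?_, fun Q => Q.exponent_eq_of_not_sq_dvd
    (hz₂o ▸ orderOf_dvd_natCard z₂) hexp⟩
  have hcyclic : IsCyclic (P : Subgroup G) := hx₀ P ▸ isCyclic_zpowers x₀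
  have hnormal := P.normal_of_subsingleton
  exact ⟨hcyclic, hnormal, P.index_centralizer_eq_one_or_eq hq hprimes hexp⟩
end

section
/- Let G be a finite group whose power graph P(G) is C_4-free, suppose |G| is not a prime power, and suppose the center Z(G) is a p-group (for a prime p) that is not elementary abelian, i.e. Z(G) contains an element of order p^2. Then Z(G) is cyclic, and for every prime q ≠ p dividing |G|, every Sylow q-subgroup of G has exponent q. Moreover, for every nontrivial q-element x ∈ G with q a prime different from p: the primes dividing |C_G(x)| are exactly p and q, and the Sylow p-subgroup of C_G(x) is cyclic and normal in C_G(x). -/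
open Subgroup

section ZPowers

variable {G : Type*} [Group G]

theorem Subgroup.coe_mem_zpowers_iff {H : Subgroup G} {g g' : H} :
    (g : G) ∈ zpowers (g' : G) ↔ g ∈ zpowers g' := by
  simp only [mem_zpowers_iff, ← coe_zpow, Subtype.ext_iff]

theorem notMem_zpowers_of_coprime_s15 {u v : G} (huv : (orderOf u).Coprime (orderOf v))
    (hu : u ≠ 1) : u ∉ zpowers v := fun h =>
  hu <| orderOf_eq_one_iff.mp <|
    Nat.eq_one_of_dvd_coprimes huv dvd_rfl (orderOf_dvd_of_mem_zpowers h)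

theorem Commute.mem_zpowers_mul_left_s15 {u v : G} (huv : Commute u v)
    (hco : (orderOf u).Coprime (orderOf v)) : u ∈ zpowers (u * v) := by
  have hpow : (u * v) ^ orderOf v = u ^ orderOf v := by
    rw [huv.mul_pow, pow_orderOf_eq_one, mul_one]
  exact zpowers_le.mpr (hpow ▸ npow_mem_zpowers _ _) (mem_zpowers_pow_iff.mpr hco.symm)

theorem Commute.mem_zpowers_mul_right_s15 {u v : G} (huv : Commute u v)
    (hco : (orderOf u).Coprime (orderOf v)) : v ∈ zpowers (u * v) := by
  rw [huv.eq]
  exact huv.symm.mem_zpowers_mul_left_s15 hco.symm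

theorem Commute.mem_zpowers_of_mem_zpowers_mul_s15 {w x g : G} (hwx : Commute w x)
    (hwx' : (orderOf w).Coprime (orderOf x)) (hgx : (orderOf g).Coprime (orderOf x))
    (hg : g ∈ zpowers (w * x)) : g ∈ zpowers w := by
  obtain ⟨k, rfl⟩ := mem_zpowers_iff.mp hg
  set N := orderOf w * orderOf ((w * x) ^ k)
  have hwN : (w ^ k) ^ N = 1 := orderOf_dvd_iff_pow_eq_one.mp <|
    (orderOf_dvd_of_mem_zpowers (zpow_mem_zpowers w k)).trans (dvd_mul_right _ _)
  have hxN : (x ^ k) ^ N = 1 := by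
    have h : ((w * x) ^ k) ^ N = 1 := orderOf_dvd_iff_pow_eq_one.mp (dvd_mul_left _ _)
    rwa [hwx.mul_zpow, (hwx.zpow_zpow k k).mul_pow, hwN, one_mul] at h
  have hxk : x ^ k = 1 := orderOf_eq_one_iff.mp <|
    Nat.eq_one_of_dvd_coprimes (hwx'.symm.mul_right hgx.symm)
      (orderOf_dvd_of_mem_zpowers (zpow_mem_zpowers x k)) (orderOf_dvd_of_pow_eq_one hxN)
  rw [hwx.mul_zpow, hxk, mul_one]
  exact zpow_mem_zpowers w k

theorem mem_zpowers_of_mem_zpowers_of_orderOf_dvd [Finite G] {x y : G} (hxy : x ∈ zpowers y)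
    (hyx : orderOf y ∣ orderOf x) : y ∈ zpowers x := by
  have hcard : Nat.card (zpowers y) ≤ Nat.card (zpowers x) := by
    rw [Nat.card_zpowers, Nat.card_zpowers]
    exact Nat.le_of_dvd (orderOf_pos x) hyx
  rw [eq_of_le_of_card_ge (zpowers_le.mpr hxy) hcard]
  exact mem_zpowers y

theorem orderOf_pow_eq_of_orderOf_eq_sq {z : G} {p : ℕ} (hp : p ≠ 0) (hzo : orderOf z = p ^ 2) :
    orderOf (z ^ p) = p := by
  rw [orderOf_pow_of_dvd hp (hzo ▸ dvd_pow_self p two_ne_zero), hzo, sq,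
    Nat.mul_div_cancel _ (Nat.pos_of_ne_zero hp)]

theorem mem_zpowers_pow_of_pow_eq_one {z w : G} {m n : ℕ} (hn : n ≠ 0)
    (hz : orderOf z = m * n) (hw : w ∈ zpowers z) (hwn : w ^ n = 1) : w ∈ zpowers (z ^ m) := by
  obtain ⟨k, rfl⟩ := mem_zpowers_iff.mp hw
  rw [← zpow_natCast, ← zpow_mul, ← orderOf_dvd_iff_zpow_eq_one, hz, Nat.cast_mul] at hwn
  obtain ⟨j, rfl⟩ := (mul_dvd_mul_iff_right (by exact_mod_cast hn)).mp hwn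
  exact mem_zpowers_iff.mpr ⟨j, by rw [← zpow_natCast, ← zpow_mul]⟩

theorem exists_prime_dvd_ne_of_not_isPrimePow {n p : ℕ} (hn : ¬ IsPrimePow n) (hp : p.Prime)
    (hpn : p ∣ n) : ∃ q, q.Prime ∧ q ∣ n ∧ q ≠ p := by
  by_contra! hne
  exact hn (isPrimePow_iff_unique_prime_dvd.mpr ⟨p, ⟨hp, hpn⟩, fun q ⟨hq, hqn⟩ => hne q hq hqn⟩)

end ZPowers

section Chain

variable {K : Type*} [Group K] [Finite K]

theorem exists_forall_mem_zpowers_of_isChain {S : Set K}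
    (hchain : IsChain (fun g g' => g ∈ zpowers g') S) (hS : S.Nonempty) :
    ∃ m ∈ S, ∀ g ∈ S, g ∈ zpowers m := by
  obtain ⟨m, hmS, hmax⟩ := S.toFinite.exists_maximalFor zpowers S hS
  refine ⟨m, hmS, fun g hg => ?_⟩
  rcases eq_or_ne g m with rfl | hgm
  · exact mem_zpowers g
  rcases hchain hg hmS hgm with h | h
  · exact h
  · exact hmax hg (zpowers_le.mpr h) (mem_zpowers g)

variable {p : ℕ} [Fact p.Prime]

theorem IsPGroup.isCyclic_of_isChain (hK : IsPGroup p K)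
    (hchain : IsChain (fun g g' => g ∈ zpowers g') {g : K | ∃ n, orderOf g = p ^ n}) :
    IsCyclic K := by
  obtain ⟨m, -, hm⟩ := exists_forall_mem_zpowers_of_isChain hchain ⟨1, 0, by simp⟩
  exact ⟨m, fun g => mem_zpowers_iff.mp (hm g (IsPGroup.iff_orderOf.mp hK g))⟩

theorem Sylow.isCyclic_and_normal_of_isChain
    (hchain : IsChain (fun g g' => g ∈ zpowers g') {g : K | ∃ n, orderOf g = p ^ n})
    (P : Sylow p K) : IsCyclic P ∧ (P : Subgroup K).Normal := by
  obtain ⟨m, ⟨n, hmn⟩, hm⟩ := exists_forall_mem_zpowers_of_isChain hchain ⟨1, 0, by simp⟩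
  have hP : ∀ Q : Sylow p K, (Q : Subgroup K) = zpowers m := fun Q =>
    (Q.is_maximal' (IsPGroup.of_card (n := n) (by rw [Nat.card_zpowers, hmn])) fun g hg =>
      hm g (by simpa only [orderOf_mk, Set.mem_ofPred_eq] using
        IsPGroup.iff_orderOf.mp Q.isPGroup' ⟨g, hg⟩)).symm
  have : Subsingleton (Sylow p K) := ⟨fun Q Q' => Sylow.ext ((hP Q).trans (hP Q').symm)⟩
  exact ⟨hP P ▸ isCyclic_zpowers m, P.normal_of_subsingleton⟩

end Chain

namespace pgC4Free

variable {G : Type*} [Group G] {p : ℕ} {z : G}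

theorem mem_zpowers_or_mem_zpowers_s15 (h : pgC4Free G)
    {a b u v : G} (hua : u ∈ zpowers a) (hub : u ∈ zpowers b) (hva : v ∈ zpowers a)
    (hvb : v ∈ zpowers b) (huv : u ∉ zpowers v) (hvu : v ∉ zpowers u) :
    a ∈ zpowers b ∨ b ∈ zpowers a := by
  by_contra! ⟨hab, hba⟩
  have hne : ∀ {c d : G}, c ∉ zpowers d → c ≠ d := fun hcd e => hcd (e ▸ mem_zpowers _)
  exact h ⟨a, u, b, v, fun e => hab (e ▸ hub), hne hab, fun e => hab (e ▸ hvb),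
    fun e => hba (e ▸ hua), hne huv, fun e => hba (e ▸ hva),
    ⟨fun e => hab (e ▸ hub), .inr hua⟩, ⟨fun e => hba (e ▸ hua), .inl hub⟩,
    ⟨fun e => hba (e ▸ hva), .inr hvb⟩, ⟨fun e => hab (e ▸ hvb), .inl hva⟩,
    fun ⟨_, h⟩ => h.elim hab hba, fun ⟨_, h⟩ => h.elim huv hvu⟩

theorem mem_zpowers_of_mem_zpowers_of_coprime (h : pgC4Free G) (hp : p.Prime)
    (hz : ∀ g, Commute z g) (hzo : orderOf z = p ^ 2) {c d : G}
    (hdp : (orderOf d).Coprime p) (hcd : c ∈ zpowers d) (hc : c ≠ 1) : d ∈ zpowers c := by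
  have hzp : orderOf (z ^ p) = p := orderOf_pow_eq_of_orderOf_eq_sq hp.ne_zero hzo
  have hzp1 : z ^ p ≠ 1 := fun e => hp.ne_one (by rw [← hzp, e, orderOf_one])
  have hcp : (orderOf c).Coprime p := hdp.coprime_dvd_left (orderOf_dvd_of_mem_zpowers hcd)
  have hzc : (orderOf z).Coprime (orderOf c) := hzo ▸ (hcp.pow_right 2).symm
  have hzd : (orderOf z).Coprime (orderOf d) := hzo ▸ (hdp.pow_right 2).symm
  have hzpd : (orderOf (z ^ p)).Coprime (orderOf d) := by rw [hzp]; exact hdp.symm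
  have hzpc : (orderOf (z ^ p)).Coprime (orderOf c) := by rw [hzp]; exact hcp.symm
  have hcomm : Commute (z ^ p) d := (hz d).pow_left p
  rcases h.mem_zpowers_or_mem_zpowers_s15 (u := z ^ p) (v := c)
      (pow_mem ((hz c).mem_zpowers_mul_left_s15 hzc) p) (hcomm.mem_zpowers_mul_left_s15 hzpd)
      ((hz c).mem_zpowers_mul_right_s15 hzc) (zpowers_le.mpr (hcomm.mem_zpowers_mul_right_s15 hzpd) hcd)
      (notMem_zpowers_of_coprime_s15 hzpc hzp1) (notMem_zpowers_of_coprime_s15 hzpc.symm hc)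
    with hab | hba
  · have hz' : z ∈ zpowers (z ^ p) := hcomm.mem_zpowers_of_mem_zpowers_mul_s15 hzpd hzd
        (zpowers_le.mpr hab ((hz c).mem_zpowers_mul_left_s15 hzc))
    rw [mem_zpowers_pow_iff, hzo, Nat.gcd_eq_left (dvd_pow_self p two_ne_zero)] at hz'
    exact absurd hz' hp.ne_one
  · rw [(hz c).eq] at hba
    exact (hz c).symm.mem_zpowers_of_mem_zpowers_mul_s15 hzc.symm hzd.symm
      (zpowers_le.mpr hba (hcomm.mem_zpowers_mul_right_s15 hzpd))

theorem orderOf_prime_of_coprime (h : pgC4Free G) (hp : p.Prime)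
    (hz : ∀ g, Commute z g) (hzo : orderOf z = p ^ 2) {d : G}
    (hdp : (orderOf d).Coprime p) (hd : d ≠ 1) : (orderOf d).Prime := by
  have hd0 : orderOf d ≠ 0 := fun h0 => hp.ne_one (Nat.coprime_zero_left _ |>.mp (h0 ▸ hdp))
  obtain ⟨r, hr, hrd⟩ := Nat.exists_prime_and_dvd (mt orderOf_eq_one_iff.mp hd)
  have hc : orderOf (d ^ (orderOf d / r)) = r := orderOf_pow_orderOf_div hd0 hrd
  have hc1 : d ^ (orderOf d / r) ≠ 1 := fun e => hr.ne_one (by rw [← hc, e, orderOf_one])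
  have hdr : orderOf d ∣ r :=
    hc ▸ orderOf_dvd_of_mem_zpowers (mem_zpowers_of_mem_zpowers_of_coprime h hp hz hzo hdp
      (npow_mem_zpowers d _) hc1)
  exact ((Nat.dvd_prime hr).mp hdr).resolve_left (mt orderOf_eq_one_iff.mp hd) ▸ hr

theorem orderOf_eq_of_orderOf_eq_pow (h : pgC4Free G) (hp : p.Prime)
    (hz : ∀ g, Commute z g) (hzo : orderOf z = p ^ 2) {q : ℕ} (hq : q.Prime) (hqp : q ≠ p)
    {x : G} (hx : x ≠ 1) {n : ℕ} (hxn : orderOf x = q ^ n) : orderOf x = q := by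
  have hxp : (orderOf x).Coprime p := hxn ▸ ((Nat.coprime_primes hq hp).mpr hqp).pow_left n
  have hprime := orderOf_prime_of_coprime h hp hz hzo hxp hx
  rw [hxn] at hprime ⊢
  rw [(hprime.pow_eq_iff.mp rfl).2, pow_one]

theorem orderOf_eq_of_commute (h : pgC4Free G) (hp : p.Prime)
    (hz : ∀ g, Commute z g) (hzo : orderOf z = p ^ 2) {x t : G} (hxt : Commute x t)
    (hx : (orderOf x).Prime) (ht : (orderOf t).Prime) (hxp : orderOf x ≠ p)
    (htp : orderOf t ≠ p) : orderOf x = orderOf t := by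
  by_contra hne
  have hxt' := hxt.orderOf_mul_eq_mul_orderOf_of_coprime ((Nat.coprime_primes hx ht).mpr hne)
  have hxtp : (orderOf (x * t)).Coprime p := hxt' ▸
    ((Nat.coprime_primes hx hp).mpr hxp).mul_left ((Nat.coprime_primes ht hp).mpr htp)
  have hxt1 : x * t ≠ 1 := fun e =>
    hx.ne_one (Nat.eq_one_of_mul_eq_one_right (by rw [← hxt', e, orderOf_one]))
  have := orderOf_prime_of_coprime h hp hz hzo hxtp hxt1
  rw [hxt'] at this
  exact Nat.not_prime_mul hx.ne_one ht.ne_one this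

variable [Finite G]

theorem mul_mem_zpowers_of_commute (h : pgC4Free G) (hp : p.Prime)
    (hz : ∀ g, Commute z g) (hzo : orderOf z = p ^ 2) {x w : G} (hx : x ≠ 1)
    (hxp : (orderOf x).Coprime p) (hwx : Commute w x) (hw : w ^ p = 1) :
    z * w ∈ zpowers z := by
  have hzp : orderOf (z ^ p) = p := orderOf_pow_eq_of_orderOf_eq_sq hp.ne_zero hzo
  have hzp1 : z ^ p ≠ 1 := fun e => hp.ne_one (by rw [← hzp, e, orderOf_one])
  have hzwp : (z * w) ^ p = z ^ p := by rw [(hz w).mul_pow, hw, mul_one]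
  have hzw : orderOf (z * w) ∣ orderOf z := by
    rw [orderOf_dvd_iff_pow_eq_one, hzo, sq, pow_mul, hzwp, ← pow_mul, ← sq, ← hzo,
      pow_orderOf_eq_one]
  have hzx : (orderOf z).Coprime (orderOf x) := by rw [hzo]; exact (hxp.pow_right 2).symm
  have hzwx : (orderOf (z * w)).Coprime (orderOf x) := hzx.coprime_dvd_left hzw
  have hzpx : (orderOf (z ^ p)).Coprime (orderOf x) := by rw [hzp]; exact hxp.symm
  have hcomm : Commute (z * w) x := (hz x).mul_left hwx
  rcases h.mem_zpowers_or_mem_zpowers_s15 (u := z ^ p) (v := x)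
      (pow_mem ((hz x).mem_zpowers_mul_left_s15 hzx) p)
      (hzwp ▸ pow_mem (hcomm.mem_zpowers_mul_left_s15 hzwx) p)
      ((hz x).mem_zpowers_mul_right_s15 hzx) (hcomm.mem_zpowers_mul_right_s15 hzwx)
      (notMem_zpowers_of_coprime_s15 hzpx hzp1) (notMem_zpowers_of_coprime_s15 hzpx.symm hx)
    with hab | hba
  · -- `z ∈ ⟨z * w⟩`, and `z * w` has no larger order than `z`
    exact mem_zpowers_of_mem_zpowers_of_orderOf_dvd (hcomm.mem_zpowers_of_mem_zpowers_mul_s15 hzwx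
      hzx (zpowers_le.mpr hab ((hz x).mem_zpowers_mul_left_s15 hzx))) hzw
  · exact (hz x).mem_zpowers_of_mem_zpowers_mul_s15 hzx hzwx
      (zpowers_le.mpr hba (hcomm.mem_zpowers_mul_left_s15 hzwx))

theorem mem_zpowers_pow_of_commute (h : pgC4Free G) (hp : p.Prime)
    (hz : ∀ g, Commute z g) (hzo : orderOf z = p ^ 2) {x w : G} (hx : x ≠ 1)
    (hxp : (orderOf x).Coprime p) (hwx : Commute w x) (hw : w ^ p = 1) :
    w ∈ zpowers (z ^ p) := by
  have hzw := mul_mem_zpowers_of_commute h hp hz hzo hx hxp hwx hw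
  exact mem_zpowers_pow_of_pow_eq_one hp.ne_zero (hzo.trans (sq p))
    ((mul_mem_cancel_left (mem_zpowers z)).mp hzw) hw

theorem pow_mem_zpowers_of_commute (h : pgC4Free G) (hp : p.Prime)
    (hz : ∀ g, Commute z g) (hzo : orderOf z = p ^ 2) {x w : G} (hx : x ≠ 1)
    (hxp : (orderOf x).Coprime p) (hwx : Commute w x) (hw1 : w ≠ 1) {i : ℕ}
    (hwi : orderOf w = p ^ i) : z ^ p ∈ zpowers w := by
  have hi : i ≠ 0 := by
    rintro rfl
    exact hw1 (orderOf_eq_one_iff.mp (by rw [hwi, pow_zero]))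
  have hpw : p ∣ orderOf w := hwi ▸ dvd_pow_self p hi
  have hw₁ : orderOf (w ^ (orderOf w / p)) = p := orderOf_pow_orderOf_div (orderOf_pos w).ne' hpw
  have hw₁z := mem_zpowers_pow_of_commute h hp hz hzo hx hxp (hwx.pow_left _)
    (hw₁ ▸ pow_orderOf_eq_one (w ^ (orderOf w / p)))
  refine zpowers_le.mpr (npow_mem_zpowers w _) (mem_zpowers_of_mem_zpowers_of_orderOf_dvd hw₁z ?_)
  rw [hw₁, orderOf_pow_eq_of_orderOf_eq_sq hp.ne_zero hzo]

theorem mem_zpowers_or_mem_zpowers_of_commute (h : pgC4Free G) (hp : p.Prime)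
    (hz : ∀ g, Commute z g) (hzo : orderOf z = p ^ 2) {x w w' : G} (hx : x ≠ 1)
    (hxp : (orderOf x).Coprime p) (hwx : Commute w x) (hw'x : Commute w' x) {i j : ℕ}
    (hwi : orderOf w = p ^ i) (hw'j : orderOf w' = p ^ j) :
    w ∈ zpowers w' ∨ w' ∈ zpowers w := by
  rcases eq_or_ne w 1 with rfl | hw1
  · exact .inl (one_mem _)
  rcases eq_or_ne w' 1 with rfl | hw'1
  · exact .inr (one_mem _)
  have hzp : orderOf (z ^ p) = p := orderOf_pow_eq_of_orderOf_eq_sq hp.ne_zero hzo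
  have hzp1 : z ^ p ≠ 1 := fun e => hp.ne_one (by rw [← hzp, e, orderOf_one])
  have hzpx : (orderOf (z ^ p)).Coprime (orderOf x) := by rw [hzp]; exact hxp.symm
  have hwx' : (orderOf w).Coprime (orderOf x) := by rw [hwi]; exact hxp.symm.pow_left i
  have hw'x' : (orderOf w').Coprime (orderOf x) := by rw [hw'j]; exact hxp.symm.pow_left j
  refine (h.mem_zpowers_or_mem_zpowers_s15 (u := z ^ p) (v := x)
      (zpowers_le.mpr (hwx.mem_zpowers_mul_left_s15 hwx')
        (pow_mem_zpowers_of_commute h hp hz hzo hx hxp hwx hw1 hwi))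
      (zpowers_le.mpr (hw'x.mem_zpowers_mul_left_s15 hw'x')
        (pow_mem_zpowers_of_commute h hp hz hzo hx hxp hw'x hw'1 hw'j))
      (hwx.mem_zpowers_mul_right_s15 hwx') (hw'x.mem_zpowers_mul_right_s15 hw'x')
      (notMem_zpowers_of_coprime_s15 hzpx hzp1) (notMem_zpowers_of_coprime_s15 hzpx.symm hx)).imp
    (fun hab => ?_) (fun hba => ?_)
  · exact hw'x.mem_zpowers_of_mem_zpowers_mul_s15 hw'x' hwx'
      (zpowers_le.mpr hab (hwx.mem_zpowers_mul_left_s15 hwx'))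
  · exact hwx.mem_zpowers_of_mem_zpowers_mul_s15 hwx' hw'x'
      (zpowers_le.mpr hba (hw'x.mem_zpowers_mul_left_s15 hw'x'))

theorem isChain_zpowers_of_le_centralizer (h : pgC4Free G) (hp : p.Prime)
    (hz : ∀ g, Commute z g) (hzo : orderOf z = p ^ 2) {x : G} (hx : x ≠ 1)
    (hxp : (orderOf x).Coprime p) {H : Subgroup G} (hH : H ≤ centralizer {x}) :
    IsChain (fun g g' => g ∈ zpowers g') {g : H | ∃ n, orderOf g = p ^ n} := by
  rintro g ⟨i, hi⟩ g' ⟨j, hj⟩ -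
  rw [← orderOf_coe] at hi hj
  simpa only [← coe_mem_zpowers_iff] using mem_zpowers_or_mem_zpowers_of_commute h hp hz hzo
    hx hxp (mem_centralizer_singleton_iff.mp (hH g.2)) (mem_centralizer_singleton_iff.mp (hH g'.2))
    hi hj

theorem prime_dvd_card_centralizer_iff (h : pgC4Free G) (hp : p.Prime)
    (hz : ∀ g, Commute z g) (hzo : orderOf z = p ^ 2) {q : ℕ} (hq : q.Prime) (hqp : q ≠ p)
    {x : G} (hxq : orderOf x = q) {s : ℕ} (hs : s.Prime) :
    s ∣ Nat.card (centralizer {x}) ↔ s = p ∨ s = q := by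
  constructor
  · intro hsC
    have : Fact s.Prime := ⟨hs⟩
    obtain ⟨t, ht⟩ := exists_prime_orderOf_dvd_card' s hsC
    rw [← orderOf_coe] at ht
    refine or_iff_not_imp_left.mpr fun hsp => ?_
    have hxt : Commute x t := (mem_centralizer_singleton_iff.mp t.2).symm
    rw [← ht, ← hxq]
    exact (orderOf_eq_of_commute h hp hz hzo hxt (hxq ▸ hq) (ht ▸ hs) (hxq ▸ hqp) (ht ▸ hsp)).symm
  · rintro (rfl | rfl)
    · exact (dvd_pow_self s two_ne_zero).trans
        (hzo ▸ orderOf_dvd_natCard _ (mem_centralizer_singleton_iff.mpr (hz x)))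
    · exact hxq ▸ orderOf_dvd_natCard _ (mem_centralizer_singleton_iff.mpr rfl)

end pgC4Free

theorem structure_of_center_nonelementary_pgroup {G : Type*} [Group G] [Finite G]
    (h : pgC4Free G) (hG : ¬ IsPrimePow (Nat.card G))
    (p : ℕ) (hp : p.Prime) (hZ : IsPGroup p (Subgroup.center G))
    (z : G) (hz : z ∈ Subgroup.center G) (hzo : orderOf z = p ^ 2) :
    IsCyclic (Subgroup.center G) ∧
    (∀ q : ℕ, q.Prime → q ≠ p → q ∣ Nat.card G →
        ∀ Q : Sylow q G, Monoid.exponent (Q : Subgroup G) = q) ∧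
    (∀ q : ℕ, q.Prime → q ≠ p → ∀ x : G, x ≠ 1 → (∃ n : ℕ, orderOf x = q ^ n) →
        (∀ s : ℕ, s.Prime →
            (s ∣ Nat.card (Subgroup.centralizer ({x} : Set G)) ↔ s = p ∨ s = q)) ∧
        (∀ P : Sylow p (Subgroup.centralizer ({x} : Set G)),
            IsCyclic (P : Subgroup (Subgroup.centralizer ({x} : Set G))) ∧
            (P : Subgroup (Subgroup.centralizer ({x} : Set G))).Normal)) := by
  have : Fact p.Prime := ⟨hp⟩
  have hzc : ∀ g, Commute z g := fun g => (mem_center_iff.mp hz g).symm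
  have hcop : ∀ {q : ℕ}, q.Prime → q ≠ p → q.Coprime p := fun hq hqp =>
    (Nat.coprime_primes hq hp).mpr hqp
  refine ⟨?_, fun q hq hqp hqG Q => ?_, fun q hq hqp x hx ⟨n, hxn⟩ => ?_⟩
  · have hpG : p ∣ Nat.card G :=
      (dvd_pow_self p two_ne_zero).trans (hzo ▸ orderOf_dvd_natCard z)
    obtain ⟨q, hq, hqG, hqp⟩ := exists_prime_dvd_ne_of_not_isPrimePow hG hp hpG
    have : Fact q.Prime := ⟨hq⟩
    obtain ⟨x, hxq⟩ := exists_prime_orderOf_dvd_card' q hqG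
    have hx : x ≠ 1 := fun e => hq.ne_one (by rw [← hxq, e, orderOf_one])
    exact hZ.isCyclic_of_isChain (h.isChain_zpowers_of_le_centralizer hp hzc hzo hx
      (hxq ▸ hcop hq hqp) (center_le_centralizer _))
  · have : Fact q.Prime := ⟨hq⟩
    have : Nontrivial Q := (nontrivial_iff_ne_bot _).mpr (Q.ne_bot_of_dvd_card hqG)
    refine (Monoid.exponent_eq_prime_iff hq).mpr fun g hg => ?_
    obtain ⟨k, hk⟩ := IsPGroup.iff_orderOf.mp Q.isPGroup' g
    rw [← orderOf_coe] at hk ⊢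
    exact h.orderOf_eq_of_orderOf_eq_pow hp hzc hzo hq hqp (by simpa using hg) hk
  · have hxq := h.orderOf_eq_of_orderOf_eq_pow hp hzc hzo hq hqp hx hxn
    exact ⟨fun s hs => h.prime_dvd_card_centralizer_iff hp hzc hzo hq hqp hxq hs,
      Sylow.isCyclic_and_normal_of_isChain (h.isChain_zpowers_of_le_centralizer hp hzc hzo hx
        (hxq ▸ hcop hq hqp) le_rfl)⟩
end

section
/- Let G be a finite group whose power graph P(G) is C_4-free, suppose |G| is not a prime power, suppose the center Z(G) is a p-group (p prime) containing an element of order p^2, let q ≠ p be a prime, and let x ∈ G be a nontrivial q-element. If ⟨y⟩ denotes the (cyclic, normal) Sylow p-subgroup of C_G(x), then the index [C_G(x) : C_{C_G(x)}(y)] is either 1 or q; in particular, if p = 2 then C_G(x) = ⟨y⟩ × S where S is the Sylow q-subgroup of C_G(x). -/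
/-!
Write `H = C_G(x)`, in which `x` (of order `q`) and `z` (of order `p²`) are central. An element
`w` of order `p² q s` with `p ∤ s ≠ 1` spans an induced 4-cycle `w ^ p, w ^ (p² s), w ^ s,
w ^ (p q s)` of the power graph; applied to `z g` this forces every `p'`-element of `H` to have
order `1` or `q`. Hence `g ^ q` is a `p`-element for every `g`. The cyclic Sylow subgroup `⟨y⟩`
is normal, because for a conjugate `y'` of `y` the elements `y x` and `y' x` share the
incomparable powers `z` and `x`. So `H / C_H(y)` embeds into `Aut ⟨y⟩ ≅ (ℤ/p^k)ˣ` with image of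
exponent dividing `q`: for odd `p` this group is cyclic, so the image has order `1` or `q`; for
`p = 2` it is a `2`-group, so the image is trivial and `H = ⟨y⟩ × S`.
-/

open Subgroup

section PowerGraph

variable {G : Type*} [Group G]

lemma pgAdj_map_iff {G' : Type*} [Group G'] {f : G →* G'} (hf : Function.Injective f)
    {a b : G} : pgAdj (f a) (f b) ↔ pgAdj a b := by
  simp only [pgAdj, hf.ne_iff, ← MonoidHom.map_zpowers, mem_map_iff_mem hf]

lemma pgC4Free.of_injective {G' : Type*} [Group G'] (h : pgC4Free G') {f : G →* G'}
    (hf : Function.Injective f) : pgC4Free G := by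
  rintro ⟨a, b, c, d, hab, hac, had, hbc, hbd, hcd, h1, h2, h3, h4, h5, h6⟩
  simp only [← pgAdj_map_iff hf (f := f)] at h1 h2 h3 h4 h5 h6
  exact h ⟨f a, f b, f c, f d, hf.ne hab, hf.ne hac, hf.ne had, hf.ne hbc, hf.ne hbd, hf.ne hcd,
    h1, h2, h3, h4, h5, h6⟩

/-- Otherwise `a, b, c, d` is an induced 4-cycle. -/
lemma pgC4Free.mem_zpowers_or_mem_zpowers_s16 (h : pgC4Free G) {a b c d : G}
    (hba : b ∈ zpowers a) (hbc : b ∈ zpowers c) (hda : d ∈ zpowers a) (hdc : d ∈ zpowers c)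
    (hbd : b ∉ zpowers d) (hdb : d ∉ zpowers b) : a ∈ zpowers c ∨ c ∈ zpowers a := by
  by_contra! hac
  obtain ⟨hac, hca⟩ := hac
  have hab : a ≠ b := by rintro rfl; exact hac hbc
  have hcb : c ≠ b := by rintro rfl; exact hca hba
  have had : a ≠ d := by rintro rfl; exact hac hdc
  have hcd : c ≠ d := by rintro rfl; exact hca hda
  have hbd' : b ≠ d := by rintro rfl; exact hbd (mem_zpowers b)
  have hac' : a ≠ c := by rintro rfl; exact hac (mem_zpowers a)
  exact h ⟨a, b, c, d, hab, hac', had, hcb.symm, hbd', hcd, ⟨hab, .inr hba⟩, ⟨hcb.symm, .inl hbc⟩,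
    ⟨hcd, .inr hdc⟩, ⟨had.symm, .inl hda⟩, fun h ↦ h.2.elim hac hca, fun h ↦ h.2.elim hbd hdb⟩

lemma pow_orderOf_div_mem_zpowers {w : G} {m n : ℕ} (hmn : m ∣ n) (hn : n ∣ orderOf w) :
    w ^ (orderOf w / m) ∈ zpowers (w ^ (orderOf w / n)) := by
  rw [← Nat.div_mul_div hn hmn, pow_mul]
  exact pow_mem (mem_zpowers _) _

/-- Otherwise the elements of orders `a, b, c, d` in `⟨w⟩` form an induced 4-cycle. -/
lemma pgC4Free.dvd_or_dvd_of_dvd_orderOf [Finite G] (h : pgC4Free G) {w : G} {a b c d : ℕ}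
    (ha : a ∣ orderOf w) (hc : c ∣ orderOf w) (hba : b ∣ a) (hbc : b ∣ c) (hda : d ∣ a)
    (hdc : d ∣ c) (hbd : ¬ b ∣ d) (hdb : ¬ d ∣ b) : a ∣ c ∨ c ∣ a := by
  have hw : orderOf w ≠ 0 := (orderOf_pos w).ne'
  have hord {m : ℕ} (hm : m ∣ orderOf w) : orderOf (w ^ (orderOf w / m)) = m :=
    orderOf_pow_orderOf_div hw hm
  have hnot {m n : ℕ} (hm : m ∣ orderOf w) (hn : n ∣ orderOf w) (hmn : ¬ m ∣ n) :
      w ^ (orderOf w / m) ∉ zpowers (w ^ (orderOf w / n)) := fun hmem ↦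
    hmn (hord hm ▸ hord hn ▸ orderOf_dvd_of_mem_zpowers hmem)
  have hb := hba.trans ha
  have hd := hda.trans ha
  refine (h.mem_zpowers_or_mem_zpowers_s16 (pow_orderOf_div_mem_zpowers hba ha)
    (pow_orderOf_div_mem_zpowers hbc hc) (pow_orderOf_div_mem_zpowers hda ha)
    (pow_orderOf_div_mem_zpowers hdc hc) (hnot hb hd hbd) (hnot hd hb hdb)).imp ?_ ?_ <;>
  · intro hmem
    simpa only [hord ha, hord hc] using orderOf_dvd_of_mem_zpowers hmem

/-- If `r` is a prime factor of `n = orderOf g` with `n ≠ r`, the orders `p n, r, p² r, p`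
dividing `orderOf (z * g) = p² n` form an induced 4-cycle of the divisibility graph. -/
lemma pgC4Free.orderOf_prime_of_commute [Finite G] (h : pgC4Free G) {p : ℕ} (hp : p.Prime)
    {z g : G} (hz : orderOf z = p ^ 2) (hzg : Commute z g) (hpg : ¬ p ∣ orderOf g)
    (hg : orderOf g ≠ 1) : (orderOf g).Prime := by
  by_contra hnp
  set n := orderOf g
  have hr : n.minFac.Prime := Nat.minFac_prime hg
  have hrn : n.minFac ∣ n := Nat.minFac_dvd n
  have hrp : n.minFac ≠ p := fun e ↦ hpg (e ▸ hrn)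
  have hco : (orderOf z).Coprime n := hz ▸ (hp.coprime_iff_not_dvd.mpr hpg).pow_left 2
  have hw : orderOf (z * g) = p ^ 2 * n := by
    rw [hzg.orderOf_mul_eq_mul_orderOf_of_coprime hco, hz]
  have hdvd := h.dvd_or_dvd_of_dvd_orderOf (w := z * g) (a := p * n) (c := p ^ 2 * n.minFac)
    (hw ▸ ⟨p, by ring⟩) (hw ▸ mul_dvd_mul_left _ hrn) (dvd_mul_of_dvd_right hrn p)
    (dvd_mul_left _ _) (dvd_mul_right p n) (dvd_mul_of_dvd_left (dvd_pow_self p two_ne_zero) _)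
    ((Nat.prime_dvd_prime_iff_eq hr hp).not.mpr hrp)
    ((Nat.prime_dvd_prime_iff_eq hp hr).not.mpr hrp.symm)
  rcases hdvd with hdvd | hdvd
  · rw [pow_two, mul_assoc] at hdvd
    have hnr : n ∣ n.minFac := ((hp.coprime_iff_not_dvd.mpr hpg).symm.dvd_mul_left).mp
      (Nat.dvd_of_mul_dvd_mul_left hp.pos hdvd)
    exact hnp (Nat.dvd_antisymm hnr hrn ▸ hr)
  · rw [pow_two, mul_assoc] at hdvd
    exact hpg ((dvd_mul_right p _).trans (Nat.dvd_of_mul_dvd_mul_left hp.pos hdvd))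

lemma pgC4Free.orderOf_eq_of_eq_pow [Finite G] (h : pgC4Free G) {p q n : ℕ}
    (hp : p.Prime) (hq : q.Prime) (hqp : q ≠ p) {z x : G} (hz : z ∈ center G)
    (hzo : orderOf z = p ^ 2) (hx1 : x ≠ 1) (hxq : orderOf x = q ^ n) : orderOf x = q := by
  have hpx : ¬ p ∣ orderOf x := fun hd ↦
    hqp ((Nat.prime_dvd_prime_iff_eq hp hq).mp (hp.dvd_of_dvd_pow (hxq ▸ hd))).symm
  have := h.orderOf_prime_of_commute hp hzo (hz.comm x) hpx (orderOf_eq_one_iff.not.mpr hx1)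
  rw [hxq] at this ⊢
  rw [Nat.Prime.eq_one_of_pow this, pow_one]

end PowerGraph

section CyclicSubgroups

variable {G : Type*} [Group G]

lemma Commute.left_mem_zpowers_mul {a x : G} (h : Commute a x)
    (hco : (orderOf a).Coprime (orderOf x)) : a ∈ zpowers (a * x) := by
  have hpow : (a * x) ^ orderOf x = a ^ orderOf x := by
    rw [h.mul_pow, pow_orderOf_eq_one, mul_one]
  exact zpowers_le.mpr (hpow ▸ pow_mem (mem_zpowers _) _) (mem_zpowers_pow_iff.mpr hco.symm)

lemma Commute.right_mem_zpowers_mul {a x : G} (h : Commute a x)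
    (hco : (orderOf a).Coprime (orderOf x)) : x ∈ zpowers (a * x) :=
  h.eq ▸ h.symm.left_mem_zpowers_mul hco.symm

lemma Commute.mem_zpowers_of_mul_mem_zpowers_mul_s16 {a b x : G} (ha : Commute a x)
    (hb : Commute b x) (hbx : (orderOf b).Coprime (orderOf x)) (hmem : b * x ∈ zpowers (a * x)) :
    b ∈ zpowers a := by
  obtain ⟨j, hj⟩ := hmem
  set n := orderOf x
  have hbn : b ^ n = (a ^ n) ^ j := by
    calc b ^ n = (b * x) ^ n := by rw [hb.mul_pow, pow_orderOf_eq_one, mul_one]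
      _ = ((a * x) ^ j) ^ n := by rw [← hj]
      _ = ((a * x) ^ n) ^ j := by rw [← zpow_natCast, ← zpow_natCast, ← zpow_mul, ← zpow_mul,
          mul_comm]
      _ = (a ^ n) ^ j := by rw [ha.mul_pow, pow_orderOf_eq_one, mul_one]
  exact zpowers_le.mpr (hbn ▸ zpow_mem (pow_mem (mem_zpowers a) n) j)
    (mem_zpowers_pow_iff.mpr hbx.symm)

lemma mem_zpowers_of_mem_zpowers_of_orderOf_eq [Finite G] {a b : G} (hab : a ∈ zpowers b)
    (h : orderOf a = orderOf b) : b ∈ zpowers a :=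
  eq_of_le_of_card_ge (zpowers_le.mpr hab) (by rw [Nat.card_zpowers, Nat.card_zpowers, h]) ▸
    mem_zpowers b

end CyclicSubgroups

/-- `y x` and `y' x`, for `y' = g y g⁻¹`, share the incomparable powers `z` and `x`, so one is a
power of the other, and then so are `y` and `y'`. -/
lemma pgC4Free.conj_mem_zpowers {G : Type*} [Group G] [Finite G] (h : pgC4Free G) {x y z : G}
    (hx : x ∈ center G) (hz : z ∈ center G) (hzy : z ∈ zpowers y) (hzx : z ∉ zpowers x)
    (hxz : x ∉ zpowers z) (hyx : (orderOf y).Coprime (orderOf x)) (g : G) :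
    g * y * g⁻¹ ∈ zpowers y := by
  have hy'o : orderOf (g * y * g⁻¹) = orderOf y := by
    simpa using (MulAut.conj g).orderOf_eq y
  have hy'x : (orderOf (g * y * g⁻¹)).Coprime (orderOf x) := hy'o ▸ hyx
  have hzy' : z ∈ zpowers (g * y * g⁻¹) := by
    obtain ⟨j, hj⟩ := mem_zpowers_iff.mp hzy
    exact mem_zpowers_iff.mpr ⟨j, by rw [conj_zpow, hj, ← (hz.comm g).eq, mul_inv_cancel_right]⟩
  rcases h.mem_zpowers_or_mem_zpowers_s16
    (zpowers_le.mpr ((hx.comm y).symm.left_mem_zpowers_mul hyx) hzy)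
    (zpowers_le.mpr ((hx.comm _).symm.left_mem_zpowers_mul hy'x) hzy')
    ((hx.comm y).symm.right_mem_zpowers_mul hyx)
    ((hx.comm _).symm.right_mem_zpowers_mul hy'x) hzx hxz with hm | hm
  · exact mem_zpowers_of_mem_zpowers_of_orderOf_eq
      ((hx.comm _).symm.mem_zpowers_of_mul_mem_zpowers_mul_s16 (hx.comm y).symm hyx hm) hy'o.symm
  · exact (hx.comm y).symm.mem_zpowers_of_mul_mem_zpowers_mul_s16 (hx.comm _).symm hy'x hm

section ConjugationAction

variable {G : Type*} [Group G] {y : G} [(zpowers y).Normal]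

lemma ker_conjNormal_zpowers :
    (MulAut.conjNormal : G →* MulAut (zpowers y)).ker = centralizer {y} := by
  ext g
  rw [← centralizer_closure, ← zpowers_eq_closure, MonoidHom.mem_ker, mem_centralizer_iff]
  simp only [MulEquiv.ext_iff, Subtype.ext_iff, MulAut.conjNormal_apply, MulAut.one_apply,
    Subtype.forall]
  exact forall₂_congr fun _ _ ↦ mul_inv_eq_iff_eq_mul.trans eq_comm

lemma conjNormal_zpowers_pow_eq_one {q : ℕ} (hq : ∀ g : G, g ^ q ∈ zpowers y) (g : G) :
    (MulAut.conjNormal g : MulAut (zpowers y)) ^ q = 1 := by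
  rw [← map_pow, ← MonoidHom.mem_ker, ker_conjNormal_zpowers]
  exact zpowers_le.mpr (mem_centralizer_singleton_iff.mpr rfl) (hq g)

variable {q : ℕ}

lemma index_centralizer_dvd_of_isCyclic [IsCyclic (MulAut (zpowers y))]
    (hq : ∀ g : G, g ^ q ∈ zpowers y) : (centralizer {y}).index ∣ q := by
  rw [← ker_conjNormal_zpowers, index_ker, ← IsCyclic.exponent_eq_card]
  refine Monoid.exponent_dvd_of_forall_pow_eq_one ?_
  rintro ⟨_, g, rfl⟩
  exact Subtype.ext (conjNormal_zpowers_pow_eq_one hq g)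

lemma centralizer_eq_top_of_coprime_totient [Finite G] (hcop : (orderOf y).totient.Coprime q)
    (hq : ∀ g : G, g ^ q ∈ zpowers y) : centralizer {y} = ⊤ := by
  rw [← ker_conjNormal_zpowers, MonoidHom.ker_eq_top_iff]
  ext g : 1
  rw [MonoidHom.one_apply, ← orderOf_eq_one_iff]
  refine Nat.eq_one_of_dvd_coprimes hcop ?_ (orderOf_dvd_of_pow_eq_one
    (conjNormal_zpowers_pow_eq_one hq g))
  rw [← Nat.card_zpowers y, ← IsCyclic.card_mulAut]
  exact orderOf_dvd_natCard _

end ConjugationAction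

lemma isCyclic_mulAut_zpowers {G : Type*} [Group G] {p k : ℕ} (hp : p.Prime) (hp2 : p ≠ 2)
    {y : G} (hy : orderOf y = p ^ k) : IsCyclic (MulAut (zpowers y)) := by
  have := ZMod.isCyclic_units_of_prime_pow p hp hp2 k
  rw [← hy, ← Nat.card_zpowers] at this
  exact isCyclic_of_surjective _ (IsCyclic.mulAutMulEquiv (zpowers y)).symm.surjective

lemma Sylow.exists_orderOf_eq_pow {G : Type*} [Group G] [Finite G] {p : ℕ} [Fact p.Prime]
    (P : Sylow p G) {y : G} (hP : (P : Subgroup G) = zpowers y) : ∃ k, orderOf y = p ^ k :=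
  Nat.card_zpowers y ▸ IsPGroup.iff_card.mp (hP ▸ P.isPGroup')

lemma sylow_sup_sylow_eq_top {G : Type*} [Group G] [Finite G] {p q : ℕ} [Fact p.Prime]
    [Fact q.Prime] (hpq : ∀ r, r.Prime → r ∣ Nat.card G → r = p ∨ r = q) (P : Sylow p G)
    (S : Sylow q G) : (P : Subgroup G) ⊔ S = ⊤ := by
  rw [← index_eq_one, Nat.eq_one_iff_not_exists_prime_dvd]
  intro r hr hrK
  rcases hpq r hr (hrK.trans (index_dvd_card _)) with rfl | rfl
  · exact P.not_dvd_index (hrK.trans (index_dvd_of_le le_sup_left))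
  · exact S.not_dvd_index (hrK.trans (index_dvd_of_le le_sup_right))

namespace pgC4Free

variable {G : Type*} [Group G] [Finite G] {p q : ℕ} {x z : G} (h : pgC4Free G) (hp : p.Prime)
  (hq : q.Prime) (hqp : q ≠ p) (hz : z ∈ center G) (hzo : orderOf z = p ^ 2)
  (hx : x ∈ center G) (hxo : orderOf x = q)
include h hp hq hqp hz hzo hx hxo

/-- A central element of order `q` times a `p'`-element of prime order `r ≠ q` would be a
`p'`-element of order `q r`, which is not prime. -/
lemma orderOf_dvd_of_not_dvd {g : G} (hpg : ¬ p ∣ orderOf g) : orderOf g ∣ q := by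
  rcases eq_or_ne (orderOf g) 1 with h1 | h1
  · exact h1 ▸ one_dvd q
  have hr := h.orderOf_prime_of_commute hp hzo (hz.comm g) hpg h1
  by_contra hgq
  have hco : (orderOf x).Coprime (orderOf g) :=
    hxo ▸ (Nat.coprime_primes hq hr).mpr fun e ↦ hgq (e ▸ dvd_rfl)
  have hxg := (hx.comm g).orderOf_mul_eq_mul_orderOf_of_coprime hco
  rw [hxo] at hxg
  refine Nat.not_prime_mul hq.ne_one h1 (hxg ▸ h.orderOf_prime_of_commute hp hzo
    (hz.comm _) ?_ (hxg ▸ fun e ↦ hq.ne_one (Nat.eq_one_of_mul_eq_one_right e)))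
  rw [hxg, hp.dvd_mul, Nat.prime_dvd_prime_iff_eq hp hq]
  exact not_or.mpr ⟨hqp.symm, hpg⟩

lemma exists_orderOf_dvd_pow_mul (g : G) : ∃ m, orderOf g ∣ p ^ m * q := by
  obtain ⟨m, n, hpn, hn⟩ := Nat.exists_eq_pow_mul_and_not_dvd (orderOf_pos g).ne' p hp.ne_one
  have hord : orderOf (g ^ (orderOf g / n)) = n :=
    orderOf_pow_orderOf_div (orderOf_pos g).ne' (hn ▸ dvd_mul_left n (p ^ m))
  have hnq := h.orderOf_dvd_of_not_dvd hp hq hqp hz hzo hx hxo (hord ▸ hpn)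
  rw [hord] at hnq
  exact ⟨m, hn ▸ mul_dvd_mul_left _ hnq⟩

lemma eq_or_eq_of_prime_dvd_card_s16 {r : ℕ} (hr : r.Prime) (hrG : r ∣ Nat.card G) :
    r = p ∨ r = q := by
  have := Fact.mk hr
  obtain ⟨g, hg⟩ := exists_prime_orderOf_dvd_card' r hrG
  refine or_iff_not_imp_left.mpr fun hrp ↦ (Nat.prime_dvd_prime_iff_eq hr hq).mp ?_
  exact hg ▸ h.orderOf_dvd_of_not_dvd hp hq hqp hz hzo hx hxo
    (hg ▸ (Nat.prime_dvd_prime_iff_eq hp hr).not.mpr (Ne.symm hrp))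

variable {P : Sylow p G} {y : G} (hP : (P : Subgroup G) = zpowers y)
include hP

lemma zpowers_normal : (zpowers y).Normal := by
  have := Fact.mk hp
  have : (zpowers z).Normal := ⟨fun n hn g ↦ by
    rwa [← ((zpowers_le.mpr hz hn).comm g).eq, mul_inv_cancel_right]⟩
  have hzy : z ∈ zpowers y := hP ▸
    (IsPGroup.of_card (by rw [Nat.card_zpowers, hzo])).le_sylow_of_normal P (mem_zpowers z)
  obtain ⟨k, hk⟩ := P.exists_orderOf_eq_pow hP
  have hyx : (orderOf y).Coprime (orderOf x) :=
    hk ▸ hxo ▸ ((Nat.coprime_primes hp hq).mpr hqp.symm).pow_left k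
  have hzx : z ∉ zpowers x := fun hm ↦ hqp.symm <| (Nat.prime_dvd_prime_iff_eq hp hq).mp <|
    (dvd_pow_self p two_ne_zero).trans (hzo ▸ hxo ▸ orderOf_dvd_of_mem_zpowers hm)
  have hxz : x ∉ zpowers z := fun hm ↦ hqp <| (Nat.prime_dvd_prime_iff_eq hq hp).mp <|
    hq.dvd_of_dvd_pow (hzo ▸ hxo ▸ orderOf_dvd_of_mem_zpowers hm)
  refine ⟨fun n hn g ↦ ?_⟩
  obtain ⟨j, rfl⟩ := mem_zpowers_iff.mp hn
  rw [← conj_zpow]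
  exact zpow_mem (h.conj_mem_zpowers hx hz hzy hzx hxz hyx g) j

/-- `g ^ q` is a `p`-element, hence lies in the normal Sylow subgroup `⟨y⟩`. -/
lemma pow_mem_zpowers_s16 (g : G) : g ^ q ∈ zpowers y := by
  have := h.zpowers_normal hp hq hqp hz hzo hx hxo hP
  obtain ⟨m, hm⟩ := h.exists_orderOf_dvd_pow_mul hp hq hqp hz hzo hx hxo g
  have hpg : IsPGroup p (zpowers (g ^ q)) := IsPGroup.of_card_dvd_pow (n := m) <| by
    rw [Nat.card_zpowers]
    exact orderOf_dvd_of_pow_eq_one (by rw [← pow_mul, mul_comm, orderOf_dvd_iff_pow_eq_one.mp hm])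
  rw [← hP] at this ⊢
  have hPq := P.is_maximal' (P.isPGroup'.to_sup_of_normal_left hpg) le_sup_left
  exact le_sup_right.trans hPq.le (mem_zpowers _)

lemma centralizer_eq_top_of_eq_two (hp2 : p = 2) : centralizer {y} = ⊤ := by
  have := h.zpowers_normal hp hq hqp hz hzo hx hxo hP
  have := Fact.mk hp
  obtain ⟨k, hk⟩ := P.exists_orderOf_eq_pow hP
  refine centralizer_eq_top_of_coprime_totient ?_ (h.pow_mem_zpowers_s16 hp hq hqp hz hzo hx hxo hP)
  subst hp2
  rcases k with _ | k
  · simp [hk]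
  · rw [hk, Nat.totient_prime_pow_succ Nat.prime_two, Nat.add_one_sub_one, mul_one]
    exact Nat.Coprime.pow_left _ ((Nat.coprime_primes Nat.prime_two hq).mpr hqp.symm)

lemma index_centralizer_dvd : (centralizer {y}).index ∣ q := by
  have := h.zpowers_normal hp hq hqp hz hzo hx hxo hP
  have := Fact.mk hp
  obtain ⟨k, hk⟩ := P.exists_orderOf_eq_pow hP
  rcases eq_or_ne p 2 with hp2 | hp2
  · rw [h.centralizer_eq_top_of_eq_two hp hq hqp hz hzo hx hxo hP hp2, index_top]
    exact one_dvd q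
  · have := isCyclic_mulAut_zpowers hp hp2 hk
    exact index_centralizer_dvd_of_isCyclic (h.pow_mem_zpowers_s16 hp hq hqp hz hzo hx hxo hP)

lemma inf_sup_commute_of_eq_two (hp2 : p = 2) (S : Sylow q G) :
    zpowers y ⊓ S = ⊥ ∧ zpowers y ⊔ S = ⊤ ∧ ∀ a ∈ zpowers y, ∀ b ∈ S, Commute a b := by
  have := Fact.mk hp
  have := Fact.mk hq
  have hprimes (r : ℕ) (hr : r.Prime) := h.eq_or_eq_of_prime_dvd_card_s16 hp hq hqp hz hzo hx hxo hr
  refine ⟨hP ▸ disjoint_iff.mp (IsPGroup.disjoint_of_ne p q hqp.symm _ _ P.isPGroup' S.isPGroup'),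
    hP ▸ sylow_sup_sylow_eq_top hprimes P S, fun a ha b _ ↦ ?_⟩
  have hy := h.centralizer_eq_top_of_eq_two hp hq hqp hz hzo hx hxo hP hp2 ▸ mem_top b
  obtain ⟨j, rfl⟩ := mem_zpowers_iff.mp ha
  exact Commute.zpow_left (mem_centralizer_singleton_iff.mp hy).symm j

end pgC4Free

theorem centralizer_index_of_qelement_center_nonelementary_general {G : Type*} [Group G] [Finite G]
    (h : pgC4Free G)
    (p : ℕ) (hp : p.Prime)
    (z : G) (hz : z ∈ Subgroup.center G) (hzo : orderOf z = p ^ 2)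
    (q : ℕ) (hq : q.Prime) (hqp : q ≠ p)
    (x : G) (hx1 : x ≠ 1) (hxq : ∃ n : ℕ, orderOf x = q ^ n) :
    ∀ P : Sylow p (Subgroup.centralizer ({x} : Set G)),
      ∀ y : (Subgroup.centralizer ({x} : Set G)),
        (P : Subgroup (Subgroup.centralizer ({x} : Set G))) = Subgroup.zpowers y →
          ((Subgroup.centralizer ({y} :
              Set (Subgroup.centralizer ({x} : Set G)))).index = 1 ∨
           (Subgroup.centralizer ({y} :
              Set (Subgroup.centralizer ({x} : Set G)))).index = q) ∧
          (p = 2 →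
            ∀ S : Sylow q (Subgroup.centralizer ({x} : Set G)),
              Subgroup.zpowers y ⊓ (S : Subgroup (Subgroup.centralizer ({x} : Set G))) = ⊥ ∧
              Subgroup.zpowers y ⊔ (S : Subgroup (Subgroup.centralizer ({x} : Set G))) = ⊤ ∧
              ∀ a ∈ Subgroup.zpowers y,
                ∀ b ∈ (S : Subgroup (Subgroup.centralizer ({x} : Set G))), Commute a b) := by
  intro P y hy
  obtain ⟨n, hn⟩ := hxq
  have hC : pgC4Free (centralizer ({x} : Set G)) := h.of_injective (subtype_injective _)
  let zC : centralizer ({x} : Set G) := ⟨z, mem_centralizer_singleton_iff.mpr (hz.comm x).eq⟩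
  let xC : centralizer ({x} : Set G) := ⟨x, mem_centralizer_singleton_iff.mpr rfl⟩
  have hzC : zC ∈ center _ := mem_center_iff.mpr fun g ↦ Subtype.ext (hz.comm g).eq.symm
  have hxC : xC ∈ center _ :=
    mem_center_iff.mpr fun g ↦ Subtype.ext (mem_centralizer_singleton_iff.mp g.2)
  have hzoC : orderOf zC = p ^ 2 := (orderOf_mk _ _).trans hzo
  have hxoC : orderOf xC = q :=
    (orderOf_mk _ _).trans (h.orderOf_eq_of_eq_pow hp hq hqp hz hzo hx1 hn)
  exact ⟨(Nat.dvd_prime hq).mp (hC.index_centralizer_dvd hp hq hqp hzC hzoC hxC hxoC hy),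
    fun hp2 ↦ hC.inf_sup_commute_of_eq_two hp hq hqp hzC hzoC hxC hxoC hy hp2⟩

theorem centralizer_index_of_qelement_center_nonelementary {G : Type*} [Group G] [Finite G]
    (h : pgC4Free G) (hG : ¬ IsPrimePow (Nat.card G))
    (p : ℕ) (hp : p.Prime) (hZ : IsPGroup p (Subgroup.center G))
    (z : G) (hz : z ∈ Subgroup.center G) (hzo : orderOf z = p ^ 2)
    (q : ℕ) (hq : q.Prime) (hqp : q ≠ p)
    (x : G) (hx1 : x ≠ 1) (hxq : ∃ n : ℕ, orderOf x = q ^ n) :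
    ∀ P : Sylow p (Subgroup.centralizer ({x} : Set G)),
      ∀ y : (Subgroup.centralizer ({x} : Set G)),
        (P : Subgroup (Subgroup.centralizer ({x} : Set G))) = Subgroup.zpowers y →
          ((Subgroup.centralizer ({y} :
              Set (Subgroup.centralizer ({x} : Set G)))).index = 1 ∨
           (Subgroup.centralizer ({y} :
              Set (Subgroup.centralizer ({x} : Set G)))).index = q) ∧
          (p = 2 →
            ∀ S : Sylow q (Subgroup.centralizer ({x} : Set G)),
              Subgroup.zpowers y ⊓ (S : Subgroup (Subgroup.centralizer ({x} : Set G))) = ⊥ ∧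
              Subgroup.zpowers y ⊔ (S : Subgroup (Subgroup.centralizer ({x} : Set G))) = ⊤ ∧
              ∀ a ∈ Subgroup.zpowers y,
                ∀ b ∈ (S : Subgroup (Subgroup.centralizer ({x} : Set G))), Commute a b) :=
  centralizer_index_of_qelement_center_nonelementary_general h p hp z hz hzo q hq hqp x hx1 hxq
end
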